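/- arXiv:2209.14019 — 6 statements merged into one kernel-verified Lean document; each statement's English description precedes it below -/
import Mathlib

section
/- Let H be a real Hilbert space, M a self-adjoint positive definite bounded operator with ‖M‖ ≤ C < ∞, and A : H ⇉ H a monotone operator that is γ_A-strongly monotone (γ_A ≥ 0) with respect to the standard norm. Then the resolvent J^M_A is Lipschitz continuous with constant 1/(1 + γ_A/C) with respect to the norm ‖x‖_M = √⟨Mx, x⟩; more precisely, for u = J^M_A(x), v = J^M_A(y) one has ⟨M(x−y), u−v⟩ ≥ (1 + γ_A/C)‖u−v‖²_M, and hence ‖u−v‖_M ≤ (1 + γ_A/C)⁻¹ ‖x−y‖_M. -/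
/-!
Strong monotonicity of `A` at the resolvent points `u`, `v`, whose `A`-values are `M (x - u)` and
`M (y - v)`, gives `⟪M (x - y), u - v⟫ ≥ ‖u - v‖²_M + γ ‖u - v‖²`, and `‖M‖ ≤ C` turns
`γ ‖u - v‖²` into `(γ / C) ‖u - v‖²_M`. Cauchy–Schwarz for the semi-inner product `⟪M ·, ·⟫`
then cancels one factor `‖u - v‖_M`, giving the Lipschitz bound.
-/

section

open scoped RealInnerProductSpace

variable {E : Type*} [NormedAddCommGroup E] [InnerProductSpace ℝ E]

def IsStronglyMonotone (A : E → Set E) (γ : ℝ) : Prop :=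
  ∀ x y u v : E, u ∈ A x → v ∈ A y → γ * ‖x - y‖ ^ 2 ≤ ⟪x - y, u - v⟫

namespace ContinuousLinearMap

variable {T : E →L[ℝ] E}

theorem IsPositive.real_inner_mul_inner_self_le (hT : T.IsPositive) (x y : E) :
    ⟪T x, y⟫ * ⟪T x, y⟫ ≤ ⟪T x, x⟫ * ⟪T y, y⟫ := by
  have hdiscr : discrim ⟪T y, y⟫ (2 * ⟪T x, y⟫) ⟪T x, x⟫ ≤ 0 := by
    refine discrim_le_zero fun t => ?_
    have hsymm : ⟪T y, x⟫ = ⟪T x, y⟫ := by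
      rw [hT.inner_left_eq_inner_right, real_inner_comm]
    have := hT.inner_nonneg_left (x + t • y)
    simp only [map_add, map_smul, inner_add_left, inner_add_right, real_inner_smul_left,
      real_inner_smul_right, hsymm] at this
    linarith
  rw [discrim] at hdiscr
  linarith

theorem IsPositive.real_inner_le_sqrt_mul_sqrt (hT : T.IsPositive) (x y : E) :
    ⟪T x, y⟫ ≤ √⟪T x, x⟫ * √⟪T y, y⟫ := by
  rw [← Real.sqrt_mul (hT.inner_nonneg_left x)]
  exact Real.le_sqrt_of_sq_le (by simpa [sq] using hT.real_inner_mul_inner_self_le x y)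

theorem real_inner_apply_self_le {C : ℝ} (hC : ‖T‖ ≤ C) (x : E) : ⟪T x, x⟫ ≤ C * ‖x‖ ^ 2 :=
  calc ⟪T x, x⟫ ≤ ‖T x‖ * ‖x‖ := real_inner_le_norm _ _
    _ ≤ C * ‖x‖ * ‖x‖ := by gcongr; exact T.le_of_opNorm_le hC x
    _ = C * ‖x‖ ^ 2 := by ring

theorem div_mul_real_inner_apply_self_le {C γ : ℝ} (hC : ‖T‖ ≤ C) (hγ : 0 ≤ γ) (x : E) :
    γ / C * ⟪T x, x⟫ ≤ γ * ‖x‖ ^ 2 := by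
  rcases (norm_nonneg T |>.trans hC).eq_or_lt with rfl | hCpos
  -- `γ / 0 = 0`
  · simp only [div_zero, zero_mul]; positivity
  · calc γ / C * ⟪T x, x⟫ ≤ γ / C * (C * ‖x‖ ^ 2) := by
          gcongr; exact real_inner_apply_self_le hC x
      _ = γ * ‖x‖ ^ 2 := by field_simp

theorem IsPositive.sqrt_inner_self_le_of_mul_le (hT : T.IsPositive) {k : ℝ} (hk : 0 < k)
    {z w : E} (h : k * ⟪T w, w⟫ ≤ ⟪T z, w⟫) : √⟪T w, w⟫ ≤ k⁻¹ * √⟪T z, z⟫ := by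
  rw [inv_mul_eq_div, le_div_iff₀ hk]
  rcases (Real.sqrt_nonneg ⟪T w, w⟫).eq_or_lt with hw | hw
  · rw [← hw, zero_mul]; positivity
  refine le_of_mul_le_mul_right ?_ hw
  calc √⟪T w, w⟫ * k * √⟪T w, w⟫ = k * ⟪T w, w⟫ := by
        rw [mul_comm _ k, mul_assoc, Real.mul_self_sqrt (hT.inner_nonneg_left w)]
    _ ≤ ⟪T z, w⟫ := h
    _ ≤ √⟪T z, z⟫ * √⟪T w, w⟫ := hT.real_inner_le_sqrt_mul_sqrt z w

end ContinuousLinearMap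

theorem IsStronglyMonotone.resolvent_inner_add_le {A : E → Set E} {γ : ℝ}
    (hA : IsStronglyMonotone A γ) (M : E →L[ℝ] E) {x y u v : E}
    (hu : M (x - u) ∈ A u) (hv : M (y - v) ∈ A v) :
    ⟪M (u - v), u - v⟫ + γ * ‖u - v‖ ^ 2 ≤ ⟪M (x - y), u - v⟫ := by
  have hsplit : x - u - (y - v) = (x - y) - (u - v) := by abel
  have := hA u v _ _ hu hv
  rw [← map_sub, hsplit, map_sub, real_inner_comm, inner_sub_left] at this
  linarith

end

local notation "⟪" x ", " y "⟫" => @inner ℝ _ _ x y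

variable {H : Type*} [NormedAddCommGroup H] [InnerProductSpace ℝ H] [CompleteSpace H]

/-- Lipschitz continuity of the resolvent `J^M_A` in the `M`-norm for a
`γ_A`-strongly monotone operator `A` and self-adjoint positive definite `M` with `‖M‖ ≤ C`.
Here `u = J^M_A x` is encoded by `M (x - u) ∈ A u` and `‖w‖_M = √⟪M w, w⟫`. -/
theorem stmt1 (M : H →L[ℝ] H)
    (hsym : ∀ x y : H, ⟪M x, y⟫ = ⟪x, M y⟫)
    (hpd : ∀ x : H, x ≠ 0 → (0:ℝ) < ⟪M x, x⟫)
    (C : ℝ) (hMC : ‖M‖ ≤ C)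
    (A : H → Set H) (γA : ℝ) (hγA : 0 ≤ γA)
    (hsm : ∀ x y u v : H, u ∈ A x → v ∈ A y → γA * ‖x - y‖ ^ 2 ≤ ⟪x - y, u - v⟫)
    (x y u v : H) (hu : M (x - u) ∈ A u) (hv : M (y - v) ∈ A v) :
    (1 + γA / C) * ⟪M (u - v), u - v⟫ ≤ ⟪M (x - y), u - v⟫ ∧
    Real.sqrt ⟪M (u - v), u - v⟫ ≤ (1 + γA / C)⁻¹ * Real.sqrt ⟪M (x - y), x - y⟫ := by
  have hM : M.IsPositive := by
    refine M.isPositive_iff.2 ⟨hsym, fun w => ?_⟩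
    rcases eq_or_ne w 0 with rfl | hw
    · simp
    · exact (hpd w hw).le
  have hmono := IsStronglyMonotone.resolvent_inner_add_le hsm M hu hv
  have hcoeff := M.div_mul_real_inner_apply_self_le hMC hγA (u - v)
  have key : (1 + γA / C) * ⟪M (u - v), u - v⟫ ≤ ⟪M (x - y), u - v⟫ := by linarith
  have hC : 0 ≤ C := (norm_nonneg M).trans hMC
  exact ⟨key, hM.sqrt_inner_self_le_of_mul_le (by positivity) key⟩
end

section
/- Let H be a real Hilbert space, T : H ⇉ H maximally monotone, and M a bounded self-adjoint positive definite operator with positive definite square root M^{1/2}. Then for every z ∈ H, J^M_T(z) = M^{-1/2} ∘ J_{M^{-1/2} T M^{-1/2}} ∘ M^{1/2}(z), i.e. the resolvent of T in the metric M equals conjugation of the standard resolvent of the operator M^{-1/2} T M^{-1/2} by M^{1/2}. -/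
local notation "⟪" x ", " y "⟫" => @inner ℝ _ _ x y

variable {H : Type*} [NormedAddCommGroup H] [InnerProductSpace ℝ H] [CompleteSpace H]

def IsMonotoneOp (A : H → Set H) : Prop :=
  ∀ x y u v : H, u ∈ A x → v ∈ A y → (0:ℝ) ≤ ⟪x - y, u - v⟫

def IsMaxMonotoneOp (A : H → Set H) : Prop :=
  IsMonotoneOp A ∧ ∀ B : H → Set H, IsMonotoneOp B → (∀ x, A x ⊆ B x) → ∀ x, B x = A x

/-- With `R = M^{1/2}` (so `M = R ∘ R`), `y = J^M_T z` is encoded by `M (z - y) ∈ T y`,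
and `y = R⁻¹ (J_S (R z))` for `S = R⁻¹ T R⁻¹` is encoded by
`R z - R y ∈ S (R y) = R⁻¹ '' T (R⁻¹ (R y))`. -/
theorem stmt2_general (T : H → Set H)
    (R : H ≃L[ℝ] H)
    (M : H → H) (hM : ∀ x, M x = R (R x))
    (z y : H) :
    M (z - y) ∈ T y ↔ R z - R y ∈ R.symm '' T (R.symm (R y)) := by
  rw [R.symm_apply_apply, R.image_symm_eq_preimage, Set.mem_preimage, ← map_sub, ← hM]

/-- `J^M_T(z) = M^{-1/2} ∘ J_{M^{-1/2} T M^{-1/2}} ∘ M^{1/2} (z)`.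
With `R = M^{1/2}` (so `M = R ∘ R`), `y = J^M_T z` is encoded by `M (z - y) ∈ T y`,
and `y = R⁻¹ (J_S (R z))` for `S = R⁻¹ T R⁻¹` is encoded by
`R z - R y ∈ S (R y) = R⁻¹ '' T (R⁻¹ (R y))`. -/
theorem stmt2 (T : H → Set H) (hT : IsMaxMonotoneOp T)
    (R : H ≃L[ℝ] H)
    (hRsym : ∀ x y : H, ⟪R x, y⟫ = ⟪x, R y⟫)
    (hRpd : ∀ x : H, x ≠ 0 → (0:ℝ) < ⟪R x, x⟫)
    (M : H → H) (hM : ∀ x, M x = R (R x))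
    (z y : H) :
    M (z - y) ∈ T y ↔ R z - R y ∈ R.symm '' T (R.symm (R y)) :=
  stmt2_general T R M hM z y
end

section
/- Let H be a real Hilbert space, M a self-adjoint positive definite bounded invertible operator, and B : H → H a β-cocoercive operator. Then for all x, y ∈ H: ‖(x − M⁻¹Bx) − (y − M⁻¹By)‖²_M ≤ ‖x − y‖²_M − ⟨(2β·Id − M⁻¹)(Bx − By), Bx − By⟩. In particular, if M − (1/(2β))Id is positive semidefinite, the forward operator x ↦ x − M⁻¹Bx is nonexpansive in the norm ‖·‖_M. -/
/-!
Write `u = x - y`, `w = Bx - By` and `s = M⁻¹w`. By symmetry of `M`,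
`‖u - s‖²_M = ‖u‖²_M - 2⟨u, w⟩ + ⟨s, w⟩`, so the estimate is exactly cocoercivity
`β‖w‖² ≤ ⟨u, w⟩`. For nonexpansiveness one needs `⟨s, w⟩ ≤ 2β‖w‖²`: the assumption on
`M` at `s` reads `‖s‖² ≤ 2β⟨w, s⟩`, and adding `0 ≤ ‖2βw - s‖²` gives `2β⟨w, s⟩ ≤ 4β²‖w‖²`.
-/

local notation "⟪" x ", " y "⟫" => @inner ℝ _ _ x y

variable {H : Type*} [NormedAddCommGroup H] [InnerProductSpace ℝ H] [CompleteSpace H]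

section

variable {E : Type*} [NormedAddCommGroup E] [InnerProductSpace ℝ E]

theorem inner_apply_sub_symm_apply (M : E ≃L[ℝ] E) (hM : ∀ x y : E, ⟪M x, y⟫ = ⟪x, M y⟫)
    (u w : E) :
    ⟪M (u - M.symm w), u - M.symm w⟫ = ⟪M u, u⟫ - 2 * ⟪u, w⟫ + ⟪M.symm w, w⟫ := by
  have hMu : ⟪M u, M.symm w⟫ = ⟪u, w⟫ := by rw [hM, M.apply_symm_apply]
  simp only [map_sub, M.apply_symm_apply, inner_sub_left, inner_sub_right, hMu,
    real_inner_comm w u, real_inner_comm w (M.symm w)]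
  ring

theorem real_inner_le_mul_norm_sq_of_norm_sq_le_mul_inner {a : ℝ} (ha : 0 < a) {s w : E}
    (h : ‖s‖ ^ 2 ≤ a * ⟪w, s⟫) : ⟪s, w⟫ ≤ a * ‖w‖ ^ 2 := by
  have hsq : 0 ≤ ‖a • w - s‖ ^ 2 := sq_nonneg _
  rw [norm_sub_sq_real, norm_smul, Real.norm_of_nonneg ha.le, real_inner_smul_left] at hsq
  rw [real_inner_comm]
  nlinarith

end

theorem stmt5_general (β : ℝ) (hβ : 0 < β) (M : H ≃L[ℝ] H)
    (hsym : ∀ x y : H, ⟪M x, y⟫ = ⟪x, M y⟫)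
    (B : H → H)
    (hco : ∀ x y : H, β * ‖B x - B y‖ ^ 2 ≤ ⟪x - y, B x - B y⟫) :
    (∀ x y : H,
      ⟪M ((x - M.symm (B x)) - (y - M.symm (B y))), (x - M.symm (B x)) - (y - M.symm (B y))⟫
        ≤ ⟪M (x - y), x - y⟫ - ⟪(2 * β) • (B x - B y) - M.symm (B x - B y), B x - B y⟫)
    ∧ ((∀ x : H, (0:ℝ) ≤ ⟪M x - (1 / (2 * β)) • x, x⟫) →
        ∀ x y : H,
          Real.sqrt ⟪M ((x - M.symm (B x)) - (y - M.symm (B y))),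
              (x - M.symm (B x)) - (y - M.symm (B y))⟫
            ≤ Real.sqrt ⟪M (x - y), x - y⟫) := by
  have hstep : ∀ x y : H, (x - M.symm (B x)) - (y - M.symm (B y))
      = (x - y) - M.symm (B x - B y) := fun x y => by rw [map_sub]; abel
  have hrhs : ∀ w : H, ⟪(2 * β) • w - M.symm w, w⟫ = 2 * β * ‖w‖ ^ 2 - ⟪M.symm w, w⟫ :=
    fun w => by rw [inner_sub_left, real_inner_smul_left, real_inner_self_eq_norm_sq]
  have estimate : ∀ x y : H,
      ⟪M ((x - M.symm (B x)) - (y - M.symm (B y))), (x - M.symm (B x)) - (y - M.symm (B y))⟫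
        ≤ ⟪M (x - y), x - y⟫ - ⟪(2 * β) • (B x - B y) - M.symm (B x - B y), B x - B y⟫ := by
    intro x y
    rw [hstep, inner_apply_sub_symm_apply M hsym, hrhs]
    linarith [hco x y]
  refine ⟨estimate, fun hpos x y => Real.sqrt_le_sqrt ?_⟩
  set w := B x - B y
  have hMs : ‖M.symm w‖ ^ 2 ≤ 2 * β * ⟪w, M.symm w⟫ := by
    have h := hpos (M.symm w)
    rw [inner_sub_left, M.apply_symm_apply, real_inner_smul_left,
      real_inner_self_eq_norm_sq] at h
    have h2β : 2 * β * (1 / (2 * β)) = 1 := by field_simp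
    nlinarith
  have hsw := real_inner_le_mul_norm_sq_of_norm_sq_le_mul_inner (by linarith) hMs
  linarith [estimate x y, hrhs w]

/-- forward-step estimate in the `M`-norm for a `β`-cocoercive `B`:
`‖(x − M⁻¹Bx) − (y − M⁻¹By)‖²_M ≤ ‖x−y‖²_M − ⟨(2β·Id − M⁻¹)(Bx−By), Bx−By⟩`;
in particular, if `M − (1/(2β))Id ⪰ 0`, the forward operator is nonexpansive in `‖·‖_M`. -/
theorem stmt5 (β : ℝ) (hβ : 0 < β) (M : H ≃L[ℝ] H)
    (hsym : ∀ x y : H, ⟪M x, y⟫ = ⟪x, M y⟫)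
    (hpd : ∀ x : H, x ≠ 0 → (0:ℝ) < ⟪M x, x⟫)
    (B : H → H)
    (hco : ∀ x y : H, β * ‖B x - B y‖ ^ 2 ≤ ⟪x - y, B x - B y⟫) :
    (∀ x y : H,
      ⟪M ((x - M.symm (B x)) - (y - M.symm (B y))), (x - M.symm (B x)) - (y - M.symm (B y))⟫
        ≤ ⟪M (x - y), x - y⟫ - ⟪(2 * β) • (B x - B y) - M.symm (B x - B y), B x - B y⟫)
    ∧ ((∀ x : H, (0:ℝ) ≤ ⟪M x - (1 / (2 * β)) • x, x⟫) →
        ∀ x y : H,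
          Real.sqrt ⟪M ((x - M.symm (B x)) - (y - M.symm (B y))),
              (x - M.symm (B x)) - (y - M.symm (B y))⟫
            ≤ Real.sqrt ⟪M (x - y), x - y⟫) :=
  stmt5_general β hβ M hsym B hco
end

section
/- Let H be a real Hilbert space, M self-adjoint positive definite bounded invertible, B : H → H β-cocoercive and γ_B-strongly monotone with γ_B ≥ 0. Then for all x, y ∈ H: ‖(x − M⁻¹Bx) − (y − M⁻¹By)‖²_M ≤ ‖x − y‖²_M − ⟨(β·Id − M⁻¹)(Bx − By), Bx − By⟩ − γ_B ‖x − y‖². -/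
local notation "⟪" x ", " y "⟫" => @inner ℝ _ _ x y

variable {H : Type*} [NormedAddCommGroup H] [InnerProductSpace ℝ H] [CompleteSpace H]

theorem LinearMap.IsSymmetric.inner_apply_sub_symm_apply {E : Type*} [NormedAddCommGroup E]
    [InnerProductSpace ℝ E] {M : E ≃ₗ[ℝ] E} (hM : (M : E →ₗ[ℝ] E).IsSymmetric) (u v : E) :
    ⟪M (u - M.symm v), u - M.symm v⟫ = ⟪M u, u⟫ - 2 * ⟪u, v⟫ + ⟪M.symm v, v⟫ := by
  have hcross : ⟪M u, M.symm v⟫ = ⟪u, v⟫ := by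
    rw [← LinearEquiv.coe_coe, hM, LinearEquiv.coe_coe, M.apply_symm_apply]
  rw [map_sub, M.apply_symm_apply]
  simp only [inner_sub_left, inner_sub_right, hcross]
  rw [real_inner_comm v u, real_inner_comm v (M.symm v)]
  ring

theorem stmt6_general (β γB : ℝ) (M : H ≃L[ℝ] H)
    (hsym : ∀ x y : H, ⟪M x, y⟫ = ⟪x, M y⟫)
    (B : H → H)
    (hco : ∀ x y : H, β * ‖B x - B y‖ ^ 2 ≤ ⟪x - y, B x - B y⟫)
    (hsm : ∀ x y : H, γB * ‖x - y‖ ^ 2 ≤ ⟪x - y, B x - B y⟫) :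
    ∀ x y : H,
      ⟪M ((x - M.symm (B x)) - (y - M.symm (B y))), (x - M.symm (B x)) - (y - M.symm (B y))⟫
        ≤ ⟪M (x - y), x - y⟫ - ⟪β • (B x - B y) - M.symm (B x - B y), B x - B y⟫
          - γB * ‖x - y‖ ^ 2 := by
  intro x y
  have hstep : (x - M.symm (B x)) - (y - M.symm (B y)) = (x - y) - M.symm (B x - B y) := by
    rw [map_sub]; abel
  have hexpand : ⟪M ((x - y) - M.symm (B x - B y)), (x - y) - M.symm (B x - B y)⟫
      = ⟪M (x - y), x - y⟫ - 2 * ⟪x - y, B x - B y⟫ + ⟪M.symm (B x - B y), B x - B y⟫ :=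
    LinearMap.IsSymmetric.inner_apply_sub_symm_apply (M := M.toLinearEquiv) hsym _ _
  rw [hstep, hexpand, inner_sub_left (β • (B x - B y)), real_inner_smul_left,
    real_inner_self_eq_norm_sq]
  -- adding the cocoercivity and strong-monotonicity bounds controls the cross term `2⟪x - y, Bx - By⟫`
  linarith [hco x y, hsm x y]

/-- forward-step estimate for `B` both `β`-cocoercive and `γ_B`-strongly
monotone:
`‖(x−M⁻¹Bx)−(y−M⁻¹By)‖²_M ≤ ‖x−y‖²_M − ⟨(β·Id − M⁻¹)(Bx−By), Bx−By⟩ − γ_B‖x−y‖²`. -/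
theorem stmt6 (β γB : ℝ) (hβ : 0 < β) (hγB : 0 ≤ γB) (M : H ≃L[ℝ] H)
    (hsym : ∀ x y : H, ⟪M x, y⟫ = ⟪x, M y⟫)
    (hpd : ∀ x : H, x ≠ 0 → (0:ℝ) < ⟪M x, x⟫)
    (B : H → H)
    (hco : ∀ x y : H, β * ‖B x - B y‖ ^ 2 ≤ ⟪x - y, B x - B y⟫)
    (hsm : ∀ x y : H, γB * ‖x - y‖ ^ 2 ≤ ⟪x - y, B x - B y⟫) :
    ∀ x y : H,
      ⟪M ((x - M.symm (B x)) - (y - M.symm (B y))), (x - M.symm (B x)) - (y - M.symm (B y))⟫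
        ≤ ⟪M (x - y), x - y⟫ - ⟪β • (B x - B y) - M.symm (B x - B y), B x - B y⟫
          - γB * ‖x - y‖ ^ 2 :=
  stmt6_general β γB M hsym B hco hsm
end

section
/- Quasi-Fejér monotonicity (scalar metric case): Let H be a real Hilbert space, C ⊆ H nonempty, and (x_k) a sequence in H such that for every z ∈ C there exist summable nonnegative sequences (η_k) and (ε_k) with ‖x_{k+1} − z‖ ≤ (1 + η_k)‖x_k − z‖ + ε_k for all k. Then (x_k) is bounded and for every z ∈ C the sequence (‖x_k − z‖) converges. -/
/-!
Write `a k = ‖x k - z‖`. Since `1 + η ≤ exp η`, unrolling the recursion gives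
`a k ≤ exp (∑ η) * (a 0 + ∑ ε) =: M`, so `(x k)` stays in a ball around `z`. Feeding this bound back
in turns the recursion into `a (k + 1) ≤ a k + δ k` with the summable `δ k = M η k + ε k`; then
`a k - ∑_{j<k} δ j` is nonincreasing and bounded below, hence convergent, and so is `a k`.
-/

open Filter Topology Finset

theorem tendsto_of_le_add_of_summable {a δ : ℕ → ℝ} (ha : BddBelow (Set.range a))
    (hδ : ∀ k, 0 ≤ δ k) (hδs : Summable δ) (hrec : ∀ k, a (k + 1) ≤ a k + δ k) :
    ∃ L, Tendsto a atTop (𝓝 L) := by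
  obtain ⟨m, hm⟩ := ha
  set v : ℕ → ℝ := fun k => a k - ∑ j ∈ range k, δ j
  have hv_anti : Antitone v := antitone_nat_of_succ_le fun k => by
    simp only [v, sum_range_succ]
    linarith [hrec k]
  have hv_bdd : BddBelow (Set.range v) := ⟨m - ∑' j, δ j, by
    rintro _ ⟨k, rfl⟩
    linarith [hm ⟨k, rfl⟩, hδs.sum_le_tsum (range k) fun j _ => hδ j]⟩
  refine ⟨(⨅ k, v k) + ∑' j, δ j, ?_⟩
  simpa [v] using (tendsto_atTop_ciInf hv_anti hv_bdd).add hδs.hasSum.tendsto_sum_nat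

theorem le_exp_tsum_mul_of_le_one_add_mul_add {a η ε : ℕ → ℝ} (ha : ∀ k, 0 ≤ a k)
    (hη : ∀ k, 0 ≤ η k) (hε : ∀ k, 0 ≤ ε k) (hηs : Summable η) (hεs : Summable ε)
    (hrec : ∀ k, a (k + 1) ≤ (1 + η k) * a k + ε k) (k : ℕ) :
    a k ≤ Real.exp (∑' j, η j) * (a 0 + ∑' j, ε j) := by
  have partial_bound : ∀ k, a k ≤
      Real.exp (∑ j ∈ range k, η j) * (a 0 + ∑ j ∈ range k, ε j) := by
    intro k
    induction k with
    | zero => simp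
    | succ k ih =>
      have hexp : 1 ≤ Real.exp (∑ j ∈ range (k + 1), η j) :=
        Real.one_le_exp (sum_nonneg fun j _ => hη j)
      calc a (k + 1) ≤ (1 + η k) * a k + ε k := hrec k
        _ ≤ Real.exp (η k) * a k + ε k := by
            gcongr
            · exact ha k
            · linarith [Real.add_one_le_exp (η k)]
        _ ≤ Real.exp (η k) * (Real.exp (∑ j ∈ range k, η j) * (a 0 + ∑ j ∈ range k, ε j))
              + Real.exp (∑ j ∈ range (k + 1), η j) * ε k := by
            gcongr
            exact le_mul_of_one_le_left (hε k) hexp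
        _ = _ := by
            rw [sum_range_succ, sum_range_succ, Real.exp_add]
            ring
  refine (partial_bound k).trans ?_
  have : 0 ≤ a 0 + ∑ j ∈ range k, ε j := add_nonneg (ha 0) (sum_nonneg fun j _ => hε j)
  gcongr
  · exact hηs.sum_le_tsum _ fun j _ => hη j
  · exact hεs.sum_le_tsum _ fun j _ => hε j

theorem tendsto_of_le_one_add_mul_add {a η ε : ℕ → ℝ} (ha : ∀ k, 0 ≤ a k)
    (hη : ∀ k, 0 ≤ η k) (hε : ∀ k, 0 ≤ ε k) (hηs : Summable η) (hεs : Summable ε)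
    (hrec : ∀ k, a (k + 1) ≤ (1 + η k) * a k + ε k) :
    ∃ L, Tendsto a atTop (𝓝 L) := by
  set M := Real.exp (∑' j, η j) * (a 0 + ∑' j, ε j)
  have hbound : ∀ k, a k ≤ M := le_exp_tsum_mul_of_le_one_add_mul_add ha hη hε hηs hεs hrec
  refine tendsto_of_le_add_of_summable ⟨0, ?_⟩ (δ := fun k => M * η k + ε k)
    (fun k => add_nonneg (mul_nonneg ((ha 0).trans (hbound 0)) (hη k)) (hε k))
    ((hηs.mul_left M).add hεs) fun k => ?_
  · rintro _ ⟨k, rfl⟩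
    exact ha k
  · nlinarith [hrec k, hbound k, hη k]

variable {H : Type*} [NormedAddCommGroup H] [InnerProductSpace ℝ H] [CompleteSpace H]

/-- quasi-Fejér monotonicity, scalar metric case: if for every `z ∈ C`
there are summable nonnegative `(η_k)`, `(ε_k)` with
`‖x_{k+1} − z‖ ≤ (1+η_k)‖x_k − z‖ + ε_k`, then `(x_k)` is bounded and `‖x_k − z‖`
converges for every `z ∈ C`. -/
theorem stmt11 (C : Set H) (hC : C.Nonempty) (x : ℕ → H)
    (h : ∀ z ∈ C, ∃ η ε : ℕ → ℝ,
      (∀ k, 0 ≤ η k) ∧ (∀ k, 0 ≤ ε k) ∧ Summable η ∧ Summable ε ∧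
      ∀ k, ‖x (k + 1) - z‖ ≤ (1 + η k) * ‖x k - z‖ + ε k) :
    (∃ R : ℝ, ∀ k, ‖x k‖ ≤ R) ∧
    ∀ z ∈ C, ∃ L : ℝ, Filter.Tendsto (fun k => ‖x k - z‖) Filter.atTop (nhds L) := by
  refine ⟨?_, fun z hz => ?_⟩
  · obtain ⟨z, hz⟩ := hC
    obtain ⟨η, ε, hη, hε, hηs, hεs, hrec⟩ := h z hz
    refine ⟨Real.exp (∑' j, η j) * (‖x 0 - z‖ + ∑' j, ε j) + ‖z‖, fun k => ?_⟩
    have := le_exp_tsum_mul_of_le_one_add_mul_add (a := fun k => ‖x k - z‖)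
      (fun _ => norm_nonneg _) hη hε hηs hεs hrec k
    linarith [norm_le_norm_sub_add (x k) z]
  · obtain ⟨η, ε, hη, hε, hηs, hεs, hrec⟩ := h z hz
    exact tendsto_of_le_one_add_mul_add (a := fun k => ‖x k - z‖)
      (fun _ => norm_nonneg _) hη hε hηs hεs hrec
end

section
/- Let H be a finite-dimensional real inner product space, M self-adjoint positive definite, and Q self-adjoint positive semidefinite with M − Q positive definite. Then the operator Q⁺ − M⁻¹ is positive definite on im(Q), i.e. ⟨(Q⁺ − M⁻¹) v, v⟩ > 0 for all nonzero v ∈ im(Q), where Q⁺ is the Moore–Penrose pseudo-inverse of Q. -/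
local notation "⟪" x ", " y "⟫" => @inner ℝ _ _ x y

variable {H : Type*} [NormedAddCommGroup H] [InnerProductSpace ℝ H] [FiniteDimensional ℝ H]

/-- By symmetry `⟪u - x, T u⟫ = ⟪T (u - x), u - x⟫ + ⟪T u - T x, x⟫`, a sum of a nonnegative
and a positive term. -/
theorem ContinuousLinearMap.IsPositive.inner_sub_apply_pos {E : Type*} [NormedAddCommGroup E]
    [InnerProductSpace ℝ E] {T : E →L[ℝ] E} (hT : T.IsPositive) {u x : E}
    (h : 0 < ⟪T u - T x, x⟫) : 0 < ⟪u - x, T u⟫ := by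
  have hsplit : ⟪u - x, T u⟫ = ⟪T (u - x), u - x⟫ + ⟪T u - T x, x⟫ := by
    rw [← hT.inner_left_eq_inner_right, ← map_sub, ← inner_add_right, sub_add_cancel,
      real_inner_comm]
  rw [hsplit]
  exact add_pos_of_nonneg_of_pos (hT.inner_nonneg_left _) h

theorem stmt14_general (M : H ≃L[ℝ] H)
    (Q : H →L[ℝ] H)
    (hQsym : ∀ x y : H, ⟪Q x, y⟫ = ⟪x, Q y⟫)
    (hQpsd : ∀ x : H, (0:ℝ) ≤ ⟪Q x, x⟫)
    (hMQ : ∀ x : H, x ≠ 0 → (0:ℝ) < ⟪M x - Q x, x⟫)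
    (Qp : H → H)
    (hQp1 : ∀ v : H, (∃ w, Q w = v) → Q (Qp v) = v) :
    ∀ v : H, (∃ w, Q w = v) → v ≠ 0 → (0:ℝ) < ⟪Qp v - M.symm v, v⟫ := by
  intro v hv hv0
  have hQ : Q.IsPositive := (Q.isPositive_iff).2 ⟨hQsym, hQpsd⟩
  have hgap := hMQ (M.symm v) (by simpa using hv0)
  rw [M.apply_symm_apply, ← hQp1 v hv] at hgap
  simpa only [hQp1 v hv] using hQ.inner_sub_apply_pos hgap

/-- if `M ≻ 0`, `Q ⪰ 0` self-adjoint with `M − Q ≻ 0`, then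
`Q⁺ − M⁻¹` is positive definite on `im(Q)`, where `Q⁺` is the Moore–Penrose
pseudo-inverse of `Q` (characterized on `im(Q)` by `Q(Q⁺ v) = v` and `Q⁺ v ∈ im(Q)`). -/
theorem stmt14 (M : H ≃L[ℝ] H)
    (hMsym : ∀ x y : H, ⟪M x, y⟫ = ⟪x, M y⟫)
    (hMpd : ∀ x : H, x ≠ 0 → (0:ℝ) < ⟪M x, x⟫)
    (Q : H →L[ℝ] H)
    (hQsym : ∀ x y : H, ⟪Q x, y⟫ = ⟪x, Q y⟫)
    (hQpsd : ∀ x : H, (0:ℝ) ≤ ⟪Q x, x⟫)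
    (hMQ : ∀ x : H, x ≠ 0 → (0:ℝ) < ⟪M x - Q x, x⟫)
    (Qp : H → H)
    (hQp1 : ∀ v : H, (∃ w, Q w = v) → Q (Qp v) = v)
    (hQp2 : ∀ v : H, ∃ w, Q w = Qp v) :
    ∀ v : H, (∃ w, Q w = v) → v ≠ 0 → (0:ℝ) < ⟪Qp v - M.symm v, v⟫ :=
  stmt14_general M Q hQsym hQpsd hMQ Qp hQp1
end
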